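/- arXiv:1006.1413 — 2 statements merged into one kernel-verified Lean document; each statement's English description precedes it below -/
import Mathlib

section
/- For all types τ1 and τ2, if τ1 ≤ τ2 holds, then ⟦τ1⟧ ⊆ ⟦τ2⟧, i.e., every value v with v ∈ τ1 also satisfies v ∈ τ2. -/
/-! ## Possibly infinite types and values, coinductively defined as M-types -/

/-- Shapes of type constructors: `int`, object types (class name plus finite
set of field names), and binary union. -/
inductive TyShape : Type where
  | int : TyShape
  | obj : String → Finset String → TyShape
  | union : TyShape

/-- Children (immediate subterms) of each shape. -/
def TyChild : TyShape → Type
  | .int => Empty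
  | .obj _ fs => {f : String // f ∈ fs}
  | .union => Bool

/-- The polynomial functor whose final coalgebra is the set of types. -/
def TyP : PFunctor := ⟨TyShape, TyChild⟩

/-- Possibly infinite types, coinductively generated by
`τ ::= int | obj C [f₁:τ₁,…,fₙ:τₙ] | τ₁ ∨ τ₂`. -/
def Ty : Type := TyP.M

/-- The type `int`. -/
def Ty.int : Ty := PFunctor.M.mk ⟨TyShape.int, Empty.elim⟩

/-- The union type `τ₁ ∨ τ₂`. -/
def Ty.union (t1 t2 : Ty) : Ty :=
  PFunctor.M.mk ⟨TyShape.union, fun b => cond b t1 t2⟩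

/-- The object type `obj C [f:τ_f  |  f ∈ fs]`. -/
def Ty.obj (c : String) (fs : Finset String) (ch : {f : String // f ∈ fs} → Ty) : Ty :=
  PFunctor.M.mk ⟨TyShape.obj c fs, ch⟩

/-- Object type with no fields. -/
def Ty.obj0 (c : String) : Ty :=
  Ty.obj c ∅ (fun f => absurd f.2 (Finset.notMem_empty f.1))

/-- Object type with a single field. -/
def Ty.obj1 (c f : String) (t : Ty) : Ty :=
  Ty.obj c {f} (fun _ => t)

/-- Object type with two (distinct) fields. -/
def Ty.obj2 (c f1 f2 : String) (t1 t2 : Ty) : Ty :=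
  Ty.obj c {f1, f2} (fun g => if g.1 = f1 then t1 else t2)

/-- Shapes of values: integers and objects. -/
inductive ValShape : Type where
  | int : ℤ → ValShape
  | obj : String → Finset String → ValShape

/-- Children of each value shape. -/
def ValChild : ValShape → Type
  | .int _ => Empty
  | .obj _ fs => {f : String // f ∈ fs}

/-- The polynomial functor whose final coalgebra is the set of values. -/
def ValP : PFunctor := ⟨ValShape, ValChild⟩

/-- Possibly infinite values, coinductively generated by
`v ::= i | obj C [f₁↦v₁,…,fₙ↦vₙ]`. -/
def Val : Type := ValP.M

/-- The integer value `i`. -/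
def Val.int (i : ℤ) : Val := PFunctor.M.mk ⟨ValShape.int i, Empty.elim⟩

/-- The object value `obj C [f ↦ v_f | f ∈ fs]`. -/
def Val.obj (c : String) (fs : Finset String) (ch : {f : String // f ∈ fs} → Val) : Val :=
  PFunctor.M.mk ⟨ValShape.obj c fs, ch⟩

/-- Object value with a single field. -/
def Val.obj1 (c f : String) (v : Val) : Val :=
  Val.obj c {f} (fun _ => v)

/-! ## Subtyping

A contractive derivation is a possibly infinite derivation with no
sub-derivation built only with rules (∨R1) and (∨R2); equivalently, the
premises of (∨R1) and (∨R2) are interpreted inductively (within a layer),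
while the premises of all other rules are interpreted coinductively (they
refer to the greatest fixed point `Subty`). -/

/-- One inductive layer of the subtyping rules: premises of (∨R1)/(∨R2) are
inductive occurrences (so only finitely many consecutive applications of
these rules are possible, i.e. derivations are contractive), premises of all
other rules are occurrences of the coinductively-interpreted relation `R`. -/
inductive SubStep (R : Ty → Ty → Prop) : Ty → Ty → Prop where
  | int : SubStep R Ty.int Ty.int
  | unionR1 {t t1 t2 : Ty} : SubStep R t t1 → SubStep R t (Ty.union t1 t2)
  | unionR2 {t t1 t2 : Ty} : SubStep R t t2 → SubStep R t (Ty.union t1 t2)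
  | unionL {t1 t2 t : Ty} : R t1 t → R t2 t → SubStep R (Ty.union t1 t2) t
  | obj {c : String} {fs fs' : Finset String} (hsub : fs' ⊆ fs)
      {ch : {f : String // f ∈ fs} → Ty} {ch' : {f : String // f ∈ fs'} → Ty} :
      (∀ (f : String) (h : f ∈ fs'), R (ch ⟨f, hsub h⟩) (ch' ⟨f, h⟩)) →
      SubStep R (Ty.obj c fs ch) (Ty.obj c fs' ch')
  | distr {c : String} {fs : Finset String} {ch : {f : String // f ∈ fs} → Ty}
      {f : String} (hf : f ∈ fs) {s1 s2 t : Ty} :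
      ch ⟨f, hf⟩ = Ty.union s1 s2 →
      R (Ty.obj c fs (fun g => if g.1 = f then s1 else ch g)) t →
      R (Ty.obj c fs (fun g => if g.1 = f then s2 else ch g)) t →
      SubStep R (Ty.obj c fs ch) t

/-- The subtyping relation `τ ≤ τ′`: greatest fixed point of `SubStep`,
i.e. existence of a contractive, possibly infinite derivation. -/
def Subty (t1 t2 : Ty) : Prop :=
  ∃ R : Ty → Ty → Prop, (∀ x y, R x y → SubStep R x y) ∧ R t1 t2

/-! ## Membership of values in types -/

/-- One inductive layer of the membership rules: premises of (∨L)/(∨R) are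
inductive (contractiveness), premises of (obj) are coinductive. -/
inductive MemStep (R : Val → Ty → Prop) : Val → Ty → Prop where
  | int (i : ℤ) : MemStep R (Val.int i) Ty.int
  | unionL {v : Val} {t1 t2 : Ty} : MemStep R v t1 → MemStep R v (Ty.union t1 t2)
  | unionR {v : Val} {t1 t2 : Ty} : MemStep R v t2 → MemStep R v (Ty.union t1 t2)
  | obj {c : String} {gs fs : Finset String} (hsub : fs ⊆ gs)
      {vch : {f : String // f ∈ gs} → Val} {ch : {f : String // f ∈ fs} → Ty} :
      (∀ (f : String) (h : f ∈ fs), R (vch ⟨f, hsub h⟩) (ch ⟨f, h⟩)) →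
      MemStep R (Val.obj c gs vch) (Ty.obj c fs ch)

/-- The membership relation `v ∈ τ`: greatest fixed point of `MemStep`,
i.e. existence of a contractive, possibly infinite derivation. -/
def MemVal (v : Val) (t : Ty) : Prop :=
  ∃ R : Val → Ty → Prop, (∀ w s, R w s → MemStep R w s) ∧ R v t

/-! ## The non-emptiness predicate `↑τ` -/

/-- One inductive layer of the non-emptiness rules: premises of (↑∨L)/(↑∨R)
are inductive (contractiveness), premises of (↑obj) are coinductive. -/
inductive NEStep (R : Ty → Prop) : Ty → Prop where
  | int : NEStep R Ty.int
  | unionL {t1 t2 : Ty} : NEStep R t1 → NEStep R (Ty.union t1 t2)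
  | unionR {t1 t2 : Ty} : NEStep R t2 → NEStep R (Ty.union t1 t2)
  | obj {c : String} {fs : Finset String} {ch : {f : String // f ∈ fs} → Ty} :
      (∀ (f : String) (h : f ∈ fs), R (ch ⟨f, h⟩)) →
      NEStep R (Ty.obj c fs ch)

/-- The non-emptiness predicate `↑τ`: greatest fixed point of `NEStep`. -/
def NotEmpty (t : Ty) : Prop :=
  ∃ R : Ty → Prop, (∀ s, R s → NEStep R s) ∧ R t

/-!
Given `v ∈ τ₁` and `τ₁ ≤ τ₂`, the relation "`v` belongs to some subtype of `τ`" is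
consistent with the membership rules, so `v ∈ τ₂` follows by coinduction. Unfolding one layer
is a well-founded recursion: rule (∨L) of subtyping consumes a top-level union step of the
membership derivation and rule (distr) a union step at one field, while the finitely many
(∨R1)/(∨R2) steps are handled by induction on the subtyping layer. The measure is the number of
union steps at the top of the membership layer plus those at the top of its fields.
-/

namespace Ty

theorem union_inj {t1 t2 s1 s2 : Ty} (h : Ty.union t1 t2 = Ty.union s1 s2) :
    t1 = s1 ∧ t2 = s2 := by
  have hch := eq_of_heq (Sigma.mk.inj_iff.mp (PFunctor.M.mk_inj h)).2
  exact ⟨congrFun hch true, congrFun hch false⟩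

theorem obj_inj {c c' : String} {fs fs' : Finset String}
    {ch : {f : String // f ∈ fs} → Ty} {ch' : {f : String // f ∈ fs'} → Ty}
    (h : Ty.obj c fs ch = Ty.obj c' fs' ch') :
    c = c' ∧ ∃ _ : fs = fs', HEq ch ch' := by
  obtain ⟨hshape, hch⟩ := Sigma.mk.inj_iff.mp (PFunctor.M.mk_inj h)
  cases hshape
  exact ⟨rfl, rfl, hch⟩

theorem int_ne_union {t1 t2 : Ty} : Ty.int ≠ Ty.union t1 t2 :=
  fun h => TyShape.noConfusion (congrArg Sigma.fst (PFunctor.M.mk_inj h))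

theorem int_ne_obj {c fs ch} : Ty.int ≠ Ty.obj c fs ch :=
  fun h => TyShape.noConfusion (congrArg Sigma.fst (PFunctor.M.mk_inj h))

theorem union_ne_obj {t1 t2 : Ty} {c fs ch} : Ty.union t1 t2 ≠ Ty.obj c fs ch :=
  fun h => TyShape.noConfusion (congrArg Sigma.fst (PFunctor.M.mk_inj h))

end Ty

theorem MemStep.mono {R R' : Val → Ty → Prop} (hRR' : ∀ v t, R v t → R' v t)
    {v : Val} {t : Ty} (h : MemStep R v t) : MemStep R' v t := by
  induction h with
  | int i => exact .int i
  | unionL _ ih => exact .unionL ih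
  | unionR _ ih => exact .unionR ih
  | obj hsub hfields => exact .obj hsub fun f hf => hRR' _ _ (hfields f hf)

theorem SubStep.mono {R R' : Ty → Ty → Prop} (hRR' : ∀ s t, R s t → R' s t)
    {s t : Ty} (h : SubStep R s t) : SubStep R' s t := by
  induction h with
  | int => exact .int
  | unionR1 _ ih => exact .unionR1 ih
  | unionR2 _ ih => exact .unionR2 ih
  | unionL h1 h2 => exact .unionL (hRR' _ _ h1) (hRR' _ _ h2)
  | obj hsub hfields => exact .obj hsub fun f hf => hRR' _ _ (hfields f hf)
  | distr hf heq h1 h2 => exact .distr hf heq (hRR' _ _ h1) (hRR' _ _ h2)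

theorem MemVal.memStep {v : Val} {t : Ty} (h : MemVal v t) : MemStep MemVal v t := by
  obtain ⟨R, hR, hvt⟩ := h
  exact (hR v t hvt).mono fun w s hws => ⟨R, hR, hws⟩

theorem MemVal.of_memStep {v : Val} {t : Ty} (h : MemStep MemVal v t) : MemVal v t :=
  ⟨fun w s => MemStep MemVal w s, fun _ _ hws => hws.mono fun _ _ => MemVal.memStep, h⟩

theorem Subty.subStep {s t : Ty} (h : Subty s t) : SubStep Subty s t := by
  obtain ⟨R, hR, hst⟩ := h
  exact (hR s t hst).mono fun x y hxy => ⟨R, hR, hxy⟩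

inductive MemDepth : ℕ → Val → Ty → Prop where
  | int (n : ℕ) (i : ℤ) : MemDepth n (Val.int i) Ty.int
  | unionL {n v t1 t2} : MemDepth n v t1 → MemDepth (n + 1) v (Ty.union t1 t2)
  | unionR {n v t1 t2} : MemDepth n v t2 → MemDepth (n + 1) v (Ty.union t1 t2)
  | obj (n : ℕ) {c : String} {gs fs : Finset String} (hsub : fs ⊆ gs)
      {vch : {f : String // f ∈ gs} → Val} {ch : {f : String // f ∈ fs} → Ty} :
      (∀ (f : String) (h : f ∈ fs), MemVal (vch ⟨f, hsub h⟩) (ch ⟨f, h⟩)) →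
      MemDepth n (Val.obj c gs vch) (Ty.obj c fs ch)

inductive MemWeight : ℕ → Val → Ty → Prop where
  | int (n : ℕ) (i : ℤ) : MemWeight n (Val.int i) Ty.int
  | unionL {n v t1 t2} : MemWeight n v t1 → MemWeight (n + 1) v (Ty.union t1 t2)
  | unionR {n v t1 t2} : MemWeight n v t2 → MemWeight (n + 1) v (Ty.union t1 t2)
  | obj {n : ℕ} {c : String} {gs fs : Finset String} (hsub : fs ⊆ gs)
      {vch : {f : String // f ∈ gs} → Val} {ch : {f : String // f ∈ fs} → Ty}
      (k : {f : String // f ∈ fs} → ℕ)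
      (hk : ∀ g, MemDepth (k g) (vch ⟨g, hsub g.2⟩) (ch g)) (hsum : ∑ g, k g ≤ n) :
      MemWeight n (Val.obj c gs vch) (Ty.obj c fs ch)

namespace MemDepth

theorem memVal {n : ℕ} {v : Val} {t : Ty} (h : MemDepth n v t) : MemVal v t := by
  refine .of_memStep ?_
  induction h with
  | int _ i => exact .int i
  | unionL _ ih => exact .unionL ih
  | unionR _ ih => exact .unionR ih
  | obj _ hsub hfields => exact .obj hsub hfields

theorem exists_of_memStep {v : Val} {t : Ty} (h : MemStep MemVal v t) :
    ∃ n, MemDepth n v t := by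
  induction h with
  | int i => exact ⟨0, .int 0 i⟩
  | unionL _ ih => obtain ⟨n, hn⟩ := ih; exact ⟨n + 1, .unionL hn⟩
  | unionR _ ih => obtain ⟨n, hn⟩ := ih; exact ⟨n + 1, .unionR hn⟩
  | obj hsub hfields => exact ⟨0, .obj 0 hsub hfields⟩

theorem of_union {n : ℕ} {v : Val} {t1 t2 : Ty} (h : MemDepth n v (Ty.union t1 t2)) :
    ∃ n', n = n' + 1 ∧ (MemDepth n' v t1 ∨ MemDepth n' v t2) := by
  generalize ht : Ty.union t1 t2 = t at h
  cases h with
  | int => exact absurd ht.symm Ty.int_ne_union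
  | unionL h1 => obtain ⟨rfl, rfl⟩ := Ty.union_inj ht; exact ⟨_, rfl, .inl h1⟩
  | unionR h2 => obtain ⟨rfl, rfl⟩ := Ty.union_inj ht; exact ⟨_, rfl, .inr h2⟩
  | obj => exact absurd ht Ty.union_ne_obj

end MemDepth

namespace MemWeight

theorem exists_of_memStep {v : Val} {t : Ty} (h : MemStep MemVal v t) :
    ∃ n, MemWeight n v t := by
  induction h with
  | int i => exact ⟨0, .int 0 i⟩
  | unionL _ ih => obtain ⟨n, hn⟩ := ih; exact ⟨n + 1, .unionL hn⟩
  | unionR _ ih => obtain ⟨n, hn⟩ := ih; exact ⟨n + 1, .unionR hn⟩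
  | @obj c gs fs hsub vch ch hfields =>
    choose k hk using fun g : {f // f ∈ fs} =>
      MemDepth.exists_of_memStep (hfields g.1 g.2).memStep
    exact ⟨_, .obj hsub k hk le_rfl⟩

theorem of_int {n : ℕ} {v : Val} (h : MemWeight n v Ty.int) : ∃ i, v = Val.int i := by
  generalize ht : Ty.int = t at h
  cases h with
  | int _ i => exact ⟨i, rfl⟩
  | unionL => exact absurd ht Ty.int_ne_union
  | unionR => exact absurd ht Ty.int_ne_union
  | obj => exact absurd ht Ty.int_ne_obj

theorem of_union {n : ℕ} {v : Val} {t1 t2 : Ty} (h : MemWeight n v (Ty.union t1 t2)) :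
    ∃ n', n = n' + 1 ∧ (MemWeight n' v t1 ∨ MemWeight n' v t2) := by
  generalize ht : Ty.union t1 t2 = t at h
  cases h with
  | int => exact absurd ht.symm Ty.int_ne_union
  | unionL h1 => obtain ⟨rfl, rfl⟩ := Ty.union_inj ht; exact ⟨_, rfl, .inl h1⟩
  | unionR h2 => obtain ⟨rfl, rfl⟩ := Ty.union_inj ht; exact ⟨_, rfl, .inr h2⟩
  | obj => exact absurd ht Ty.union_ne_obj

theorem of_obj {n : ℕ} {v : Val} {c : String} {fs : Finset String}
    {ch : {f : String // f ∈ fs} → Ty} (h : MemWeight n v (Ty.obj c fs ch)) :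
    ∃ (gs : Finset String) (hsub : fs ⊆ gs) (vch : {f : String // f ∈ gs} → Val)
      (k : {f : String // f ∈ fs} → ℕ), v = Val.obj c gs vch ∧
      (∀ g, MemDepth (k g) (vch ⟨g, hsub g.2⟩) (ch g)) ∧ ∑ g, k g ≤ n := by
  generalize ht : Ty.obj c fs ch = t at h
  cases h with
  | int => exact absurd ht.symm Ty.int_ne_obj
  | unionL => exact absurd ht.symm Ty.union_ne_obj
  | unionR => exact absurd ht.symm Ty.union_ne_obj
  | obj hsub k hk hsum =>
    obtain ⟨rfl, rfl, hch⟩ := Ty.obj_inj ht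
    cases hch
    exact ⟨_, hsub, _, k, rfl, hk, hsum⟩

theorem split_field {n : ℕ} {v : Val} {c : String} {fs : Finset String}
    {ch : {f : String // f ∈ fs} → Ty} {f : String} (hf : f ∈ fs) {s1 s2 : Ty}
    (hunion : ch ⟨f, hf⟩ = Ty.union s1 s2) (h : MemWeight n v (Ty.obj c fs ch)) :
    ∃ n' < n, MemWeight n' v (Ty.obj c fs (fun g => if g.1 = f then s1 else ch g)) ∨
      MemWeight n' v (Ty.obj c fs (fun g => if g.1 = f then s2 else ch g)) := by
  obtain ⟨gs, hsub, vch, k, rfl, hk, hsum⟩ := h.of_obj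
  have hkf := hk ⟨f, hf⟩
  rw [hunion] at hkf
  obtain ⟨m, hkm, hside⟩ := hkf.of_union
  have hlt : ∑ g, Function.update k ⟨f, hf⟩ m g < n := by
    have := Finset.sum_eq_add_sum_sdiff_singleton_of_mem (Finset.mem_univ ⟨f, hf⟩) k
    rw [Finset.sum_update_of_mem (Finset.mem_univ _)]
    omega
  have hreplace : ∀ s, MemDepth m (vch ⟨f, hsub hf⟩) s →
      MemWeight (∑ g, Function.update k ⟨f, hf⟩ m g) (Val.obj c gs vch)
        (Ty.obj c fs (fun g => if g.1 = f then s else ch g)) := by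
    refine fun s hs => .obj hsub _ (fun g => ?_) le_rfl
    by_cases hg : g = ⟨f, hf⟩
    · subst hg
      simpa using hs
    · have hg' : g.1 ≠ f := fun h => hg (Subtype.ext h)
      simpa [hg, hg'] using hk g
  exact ⟨_, hlt, hside.imp (hreplace s1) (hreplace s2)⟩

end MemWeight

def MemSubtype (v : Val) (t : Ty) : Prop :=
  ∃ s, MemVal v s ∧ Subty s t

theorem memStep_memSubtype_of_memWeight (n : ℕ) {v : Val} {s t : Ty}
    (hvs : MemWeight n v s) (hst : SubStep Subty s t) : MemStep MemSubtype v t := by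
  induction n using Nat.strong_induction_on generalizing s t with
  | _ n IH =>
  induction hst with
  | int =>
    obtain ⟨i, rfl⟩ := hvs.of_int
    exact .int i
  | unionR1 _ ih => exact .unionL (ih hvs)
  | unionR2 _ ih => exact .unionR (ih hvs)
  | unionL h1 h2 =>
    obtain ⟨n', rfl, hv1 | hv2⟩ := hvs.of_union
    · exact IH n' n'.lt_succ_self hv1 h1.subStep
    · exact IH n' n'.lt_succ_self hv2 h2.subStep
  | obj hsub' hfields =>
    obtain ⟨gs, hsub, vch, k, rfl, hk, -⟩ := hvs.of_obj
    exact .obj (hsub'.trans hsub) fun f hf => ⟨_, (hk ⟨f, hsub' hf⟩).memVal, hfields f hf⟩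
  | distr hf hunion h1 h2 =>
    obtain ⟨n', hlt, hv1 | hv2⟩ := hvs.split_field hf hunion
    · exact IH n' hlt hv1 h1.subStep
    · exact IH n' hlt hv2 h2.subStep

theorem MemSubtype.memStep {v : Val} {t : Ty} (h : MemSubtype v t) :
    MemStep MemSubtype v t := by
  obtain ⟨s, hvs, hst⟩ := h
  obtain ⟨n, hn⟩ := MemWeight.exists_of_memStep hvs.memStep
  exact memStep_memSubtype_of_memWeight n hn hst.subStep

/-- Soundness of subtyping: if `τ1 ≤ τ2` then `⟦τ1⟧ ⊆ ⟦τ2⟧`. -/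
theorem subtyping_sound (t1 t2 : Ty) (h : Subty t1 t2) :
    ∀ v : Val, MemVal v t1 → MemVal v t2 :=
  fun _ hv => ⟨MemSubtype, fun _ _ => MemSubtype.memStep, ⟨t1, hv, h⟩⟩
end

section
/- Object types distribute over union types up to subtyping equivalence: for every class name C, field name f, and types τ1, τ2, both obj C [f:τ1 ∨ τ2] ≤ (obj C [f:τ1]) ∨ (obj C [f:τ2]) and (obj C [f:τ1]) ∨ (obj C [f:τ2]) ≤ obj C [f:τ1 ∨ τ2] hold, i.e., obj C [f:τ1 ∨ τ2] ≅ (obj C [f:τ1]) ∨ (obj C [f:τ2]). -/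
/-!
(distr) splits `obj C [f:τ1 ∨ τ2]` into `obj C [f:τi]`, each of which lies below the union by
(∨R1)/(∨R2) and reflexivity; conversely (∨L) reduces the other direction to
`obj C [f:τi] ≤ obj C [f:τ1 ∨ τ2]`, which is (obj) applied to `τi ≤ τ1 ∨ τ2`. Reflexivity is
the only coinductive argument: the identity derivation is contractive because a union on the
left is always taken apart by (∨L) before (∨R1)/(∨R2) is used.
-/

lemma SubStep.mono_s11 {R S : Ty → Ty → Prop} (h : ∀ x y, R x y → S x y) {x y : Ty}
    (hxy : SubStep R x y) : SubStep S x y := by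
  induction hxy with
  | int => exact .int
  | unionR1 _ ih => exact .unionR1 ih
  | unionR2 _ ih => exact .unionR2 ih
  | unionL h1 h2 => exact .unionL (h _ _ h1) (h _ _ h2)
  | obj hsub hch => exact .obj hsub fun g hg => h _ _ (hch g hg)
  | distr hf heq h1 h2 => exact .distr hf heq (h _ _ h1) (h _ _ h2)

theorem Subty.subStep_s11 {x y : Ty} : Subty x y → SubStep Subty x y
  | ⟨R, hR, hxy⟩ => (hR _ _ hxy).mono_s11 fun _ _ hab => ⟨R, hR, hab⟩

theorem subty_iff_subStep {x y : Ty} : Subty x y ↔ SubStep Subty x y :=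
  ⟨Subty.subStep_s11, fun h => ⟨SubStep Subty, fun _ _ hab => hab.mono_s11 fun _ _ => Subty.subStep_s11, h⟩⟩

lemma Ty.mk_union_eq {ch : TyP.B TyShape.union → TyP.M} :
    PFunctor.M.mk ⟨TyShape.union, ch⟩ = Ty.union (ch true) (ch false) := by
  unfold Ty.union
  congr 2
  funext b
  cases b <;> rfl

theorem subty_refl (x : Ty) : Subty x x := by
  -- The identity, plus the pairs `(τi, τ1 ∨ τ2)` left behind by (∨L) on `τ1 ∨ τ2 ≤ τ1 ∨ τ2`.
  let R : Ty → Ty → Prop := fun x y => y = x ∨ ∃ a b, y = Ty.union a b ∧ (x = a ∨ x = b)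
  have step_self : ∀ x, SubStep R x x := by
    intro x
    obtain ⟨⟨sh, ch⟩, rfl⟩ : ∃ d, x = PFunctor.M.mk d := ⟨_, (PFunctor.M.mk_dest x).symm⟩
    cases sh with
    | int =>
      obtain rfl : ch = Empty.elim := funext fun e => e.elim
      exact .int
    | obj c fs => exact .obj subset_rfl fun _ _ => Or.inl rfl
    | union =>
      rw [Ty.mk_union_eq]
      exact .unionL (Or.inr ⟨_, _, rfl, Or.inl rfl⟩) (Or.inr ⟨_, _, rfl, Or.inr rfl⟩)
  refine ⟨R, ?_, Or.inl rfl⟩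
  rintro a b (rfl | ⟨p, q, rfl, rfl | rfl⟩)
  · exact step_self _
  · exact .unionR1 (step_self _)
  · exact .unionR2 (step_self _)

theorem subty_union_of_left {t t1 : Ty} (h : Subty t t1) (t2 : Ty) : Subty t (Ty.union t1 t2) :=
  subty_iff_subStep.2 (.unionR1 (subty_iff_subStep.1 h))

theorem subty_union_of_right {t t2 : Ty} (t1 : Ty) (h : Subty t t2) : Subty t (Ty.union t1 t2) :=
  subty_iff_subStep.2 (.unionR2 (subty_iff_subStep.1 h))

theorem union_subty {t1 t2 t : Ty} (h1 : Subty t1 t) (h2 : Subty t2 t) :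
    Subty (Ty.union t1 t2) t :=
  subty_iff_subStep.2 (.unionL h1 h2)

theorem obj1_subty_obj1 (c f : String) {t s : Ty} (h : Subty t s) :
    Subty (Ty.obj1 c f t) (Ty.obj1 c f s) :=
  subty_iff_subStep.2 (.obj subset_rfl fun _ _ => h)

theorem obj1_union_subty {c f : String} {s1 s2 t : Ty} (h1 : Subty (Ty.obj1 c f s1) t)
    (h2 : Subty (Ty.obj1 c f s2) t) : Subty (Ty.obj1 c f (Ty.union s1 s2)) t := by
  have update_eq : ∀ (s : Ty) (ch : {g : String // g ∈ ({f} : Finset String)} → Ty),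
      (fun g : {g : String // g ∈ ({f} : Finset String)} => if g.1 = f then s else ch g) =
        fun _ => s := fun s ch => funext fun g => if_pos (Finset.mem_singleton.1 g.2)
  refine subty_iff_subStep.2 (.distr (Finset.mem_singleton_self f) rfl ?_ ?_) <;>
    rw [update_eq]
  exacts [h1, h2]

/-- Object types distribute over union types up to subtyping equivalence:
`obj C [f:τ1 ∨ τ2] ≅ (obj C [f:τ1]) ∨ (obj C [f:τ2])`. -/
theorem obj_distributes_over_union (c f : String) (t1 t2 : Ty) :
    Subty (Ty.obj1 c f (Ty.union t1 t2)) (Ty.union (Ty.obj1 c f t1) (Ty.obj1 c f t2)) ∧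
    Subty (Ty.union (Ty.obj1 c f t1) (Ty.obj1 c f t2)) (Ty.obj1 c f (Ty.union t1 t2)) :=
  ⟨obj1_union_subty (subty_union_of_left (subty_refl _) _)
      (subty_union_of_right _ (subty_refl _)),
    union_subty (obj1_subty_obj1 c f (subty_union_of_left (subty_refl t1) t2))
      (obj1_subty_obj1 c f (subty_union_of_right t1 (subty_refl t2)))⟩
end
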